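/- arXiv:1201.5805 — 8 statements merged into one kernel-verified Lean document; each statement's English description precedes it below -/
import Mathlib

section
/- Let K ≥ 3 and define Q_m(K) = min(K−m, m). Suppose D_m (2 ≤ m ≤ K−1) satisfies D_{K−1} = K/(K−1) and D_m = ((m+1)/m) · Q_m(K)/(1 + (Q_m(K)−1)/D_{m+1}) for 2 ≤ m ≤ K−2. Then for 2 ≤ m ≤ ⌈K/2⌉, D_m = ( 1/2 − m(m−1)/(2⌈K/2⌉(⌈K/2⌉−1)) + (m(m−1)/(⌊K/2⌋(⌈K/2⌉−1))) · Σ_{ℓ=⌈K/2⌉+1}^{K} 1/ℓ )^{-1}. -/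
/-!
Pass to the reciprocals `E m = (D m)⁻¹`: the recurrence becomes the *linear* recurrence
`E m = m (1 + (Q - 1) E (m + 1)) / ((m + 1) Q)`. For `⌈K/2⌉ ≤ m` one has `Q = K - m`, and
`(K - m) E m = m ∑_{ℓ > m} 1/ℓ` propagates downwards from `m = K`. For `m < ⌈K/2⌉` one has
`Q = m`, and `E m = (1 + (m - 1) E (m + 1)) / (m + 1)` has the general solution
`1/2 + α m (m - 1)`; matching at `m = ⌈K/2⌉` determines `α`.
-/

open Finset

theorem sub_mul_eq_mul_sum_Icc_one_div_of_recurrence {K lo : ℕ} {E : ℕ → ℝ}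
    (hrec : ∀ m, lo ≤ m → m < K →
      E m = m * (1 + (K - m - 1) * E (m + 1)) / ((m + 1) * (K - m))) :
    ∀ m, lo ≤ m → m ≤ K → (K - m) * E m = m * ∑ ℓ ∈ Icc (m + 1) K, (1 : ℝ) / ℓ := by
  intro m hlo hmK
  refine Nat.decreasingInduction'
    (P := fun m ↦ (K - m) * E m = m * ∑ ℓ ∈ Icc (m + 1) K, (1 : ℝ) / ℓ) ?_ hmK (by simp)
  intro k hkK hmk ih
  have hKk : (K : ℝ) - k ≠ 0 := sub_ne_zero.mpr (by exact_mod_cast hkK.ne')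
  have hsplit : ∑ ℓ ∈ Icc (k + 1) K, (1 : ℝ) / ℓ
      = 1 / (k + 1) + ∑ ℓ ∈ Icc (k + 1 + 1) K, (1 : ℝ) / ℓ := by
    rw [Icc_eq_cons_Ioc hkK, sum_cons, ← Icc_add_one_left_eq_Ioc]
    push_cast
    rfl
  push_cast at ih
  rw [hrec k (hlo.trans hmk) hkK, hsplit]
  field_simp
  linear_combination k * ih

theorem eq_half_add_mul_of_recurrence {lo n : ℕ} {E : ℕ → ℝ} {α : ℝ}
    (hrec : ∀ m, lo ≤ m → m < n → E m = (1 + (m - 1) * E (m + 1)) / (m + 1))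
    (hn : E n = 1 / 2 + α * n * (n - 1)) :
    ∀ m, lo ≤ m → m ≤ n → E m = 1 / 2 + α * m * (m - 1) := by
  intro m hlo hmn
  refine Nat.decreasingInduction' (P := fun m ↦ E m = 1 / 2 + α * m * (m - 1)) ?_ hmn hn
  intro k hkn hmk ih
  push_cast at ih
  rw [hrec k (hlo.trans hmk) hkn, ih]
  field_simp
  ring

theorem inv_eq_of_recurrence {K : ℕ} {D : ℕ → ℝ}
    (hinit : D (K - 1) = (K : ℝ) / ((K : ℝ) - 1))
    (hrec : ∀ m, 2 ≤ m → m ≤ K - 2 →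
      D m = ((m : ℝ) + 1) / m * (min (K - m) m : ℕ) /
        (1 + ((min (K - m) m : ℕ) - 1) / D (m + 1))) :
    ∀ m, 2 ≤ m → m < K →
      (D m)⁻¹ = m * (1 + ((min (K - m) m : ℕ) - 1) * (D (m + 1))⁻¹) /
        ((m + 1) * (min (K - m) m : ℕ)) := by
  intro m hm2 hmK
  have hm : (m : ℝ) ≠ 0 := by positivity
  rcases Nat.lt_or_ge m (K - 1) with hlt | hge
  · rw [hrec m hm2 (by omega), inv_div]
    field_simp
  · -- at `m = K - 1` the recurrence degenerates (`Q = 1`) to the initial value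
    obtain rfl : m = K - 1 := by omega
    have hQ : min (K - (K - 1)) (K - 1) = 1 := by omega
    have hcast : ((K - 1 : ℕ) : ℝ) = K - 1 := by
      push_cast [Nat.cast_sub (by omega : 1 ≤ K)]; rfl
    rw [hinit, hQ, hcast, inv_div]
    ring

theorem stmt_1_general (K : ℕ) (D : ℕ → ℝ)
    (hinit : D (K - 1) = (K : ℝ) / ((K : ℝ) - 1))
    (hrec : ∀ m, 2 ≤ m → m ≤ K - 2 →
      D m = ((m : ℝ) + 1) / m * (min (K - m) m : ℕ) /
        (1 + ((min (K - m) m : ℕ) - 1) / D (m + 1))) :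
    ∀ m, 2 ≤ m → m ≤ (K + 1) / 2 →
      D m = (1 / 2
        - (m : ℝ) * ((m : ℝ) - 1) /
            (2 * ((K + 1) / 2 : ℕ) * (((K + 1) / 2 : ℕ) - 1))
        + (m : ℝ) * ((m : ℝ) - 1) / ((K / 2 : ℕ) * (((K + 1) / 2 : ℕ) - 1)) *
            ∑ ℓ ∈ Icc ((K + 1) / 2 + 1) K, (1 : ℝ) / ℓ)⁻¹ := by
  intro m hm2 hmc
  set c := (K + 1) / 2
  set f := K / 2
  set S := ∑ ℓ ∈ Icc (c + 1) K, (1 : ℝ) / ℓ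
  have hrecE := inv_eq_of_recurrence hinit hrec
  have hfc : (f : ℝ) = K - c := by rw [eq_sub_iff_add_eq]; exact_mod_cast (by omega : f + c = K)
  have hc : (c : ℝ) ≠ 0 := by exact_mod_cast (by omega : c ≠ 0)
  have hc1 : (c : ℝ) - 1 ≠ 0 := sub_ne_zero.mpr (by exact_mod_cast (by omega : c ≠ 1))
  have hf : (f : ℝ) ≠ 0 := by exact_mod_cast (by omega : f ≠ 0)
  have hupper : ∀ m, c ≤ m → m ≤ K →
      (K - m) * (D m)⁻¹ = m * ∑ ℓ ∈ Icc (m + 1) K, (1 : ℝ) / ℓ :=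
    sub_mul_eq_mul_sum_Icc_one_div_of_recurrence fun m hcm hmK ↦ by
      rw [hrecE m (by omega) hmK, min_eq_left (by omega), Nat.cast_sub hmK.le]
  have hmiddle : (D c)⁻¹ = c * S / f :=
    eq_div_of_mul_eq hf (by rw [hfc, mul_comm]; exact hupper c le_rfl (by omega))
  have hlower : ∀ m, 2 ≤ m → m ≤ c →
      (D m)⁻¹ = 1 / 2 + (S / (f * (c - 1)) - 1 / (2 * c * (c - 1))) * m * (m - 1) := by
    refine eq_half_add_mul_of_recurrence (fun m hm2 hmc ↦ ?_) ?_
    · have hm : (m : ℝ) ≠ 0 := by positivity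
      rw [hrecE m hm2 (by omega), min_eq_right (by omega)]
      field_simp
    · rw [hmiddle]
      field_simp
      ring
  rw [← inv_inv (D m), hlower m hm2 hmc]
  ring

theorem stmt_1 (K : ℕ) (hK : 3 ≤ K) (D : ℕ → ℝ)
    (hpos : ∀ m, 2 ≤ m → m ≤ K - 1 → 0 < D m)
    (hinit : D (K - 1) = (K : ℝ) / ((K : ℝ) - 1))
    (hrec : ∀ m, 2 ≤ m → m ≤ K - 2 →
      D m = ((m : ℝ) + 1) / m * (min (K - m) m : ℕ) /
        (1 + ((min (K - m) m : ℕ) - 1) / D (m + 1))) :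
    ∀ m, 2 ≤ m → m ≤ (K + 1) / 2 →
      D m = (1 / 2
        - (m : ℝ) * ((m : ℝ) - 1) /
            (2 * ((K + 1) / 2 : ℕ) * (((K + 1) / 2 : ℕ) - 1))
        + (m : ℝ) * ((m : ℝ) - 1) / ((K / 2 : ℕ) * (((K + 1) / 2 : ℕ) - 1)) *
            ∑ ℓ ∈ Icc ((K + 1) / 2 + 1) K, (1 : ℝ) / ℓ)⁻¹ :=
  stmt_1_general K D hinit hrec
end

section
/- For the recursion with Q_m(K) = min(K−m, m): if D_m = ((m+1)/m)·Q_m(K)/(1+(Q_m(K)−1)/D_{m+1}) for ⌈K/2⌉ ≤ m ≤ K−2 with D_{K−1} = K/(K−1), and we set γ_m = (K−m)/(m·D_m), then γ_m = γ_{m+1} + 1/(m+1) for all m in this range, and consequently γ_m = Σ_{ℓ=m+1}^{K} 1/ℓ. -/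
/-!
Write `t = 1 + (Q - 1) / D_{m+1}` with `Q = K - m`. Substituting the recursion,
`γ_m = Q / (m · D_m) = t / (m + 1) = 1 / (m + 1) + (Q - 1) / ((m + 1) · D_{m+1})`, and the last
term is `γ_{m+1}`. Since `γ_{K-1} = 1 / K`, the closed form follows by telescoping down from `K - 1`.
-/

open Finset

/-- Both sides equal `t / (m + 1)` with `t = 1 + (Q - 1) / E`; this holds even when `E = 0` or
`t = 0`, where division by zero returns `0` on both sides. -/
lemma div_mul_recursion_eq {F : Type*} [Field F] {m Q : F} (E : F) (hm : m ≠ 0)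
    (hm1 : m + 1 ≠ 0) (hQ : Q ≠ 0) :
    Q / (m * ((m + 1) / m * Q / (1 + (Q - 1) / E))) = (Q - 1) / ((m + 1) * E) + 1 / (m + 1) := by
  have hsplit : (Q - 1) / ((m + 1) * E) + 1 / (m + 1) = (1 + (Q - 1) / E) / (m + 1) := by
    rw [mul_comm, ← div_div]
    ring
  rw [hsplit]
  rcases eq_or_ne (1 + (Q - 1) / E) 0 with ht | ht
  · simp [ht]
  · field_simp

lemma eq_sum_Ioc_of_eq_add_succ {M : Type*} [AddCommMonoid M] {γ g : ℕ → M} {a b n : ℕ}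
    (hbn : b ≤ n) (hstep : ∀ m, a ≤ m → m < b → γ m = γ (m + 1) + g (m + 1))
    (hb : γ b = ∑ ℓ ∈ Ioc b n, g ℓ) {m : ℕ} (ham : a ≤ m) (hmb : m ≤ b) :
    γ m = ∑ ℓ ∈ Ioc m n, g ℓ := by
  induction hmb using Nat.decreasingInduction with
  | self => exact hb
  | of_succ m hmb ih =>
    rw [hstep m ham hmb, ih (ham.trans m.le_succ), add_comm,
      ← sum_Ioc_consecutive g m.le_succ (hmb.trans_le hbn), Nat.Ioc_succ_singleton, sum_singleton]

theorem stmt_2_general (K : ℕ) (hK : 3 ≤ K) (D : ℕ → ℝ)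
    (hinit : D (K - 1) = (K : ℝ) / ((K : ℝ) - 1))
    (hrec : ∀ m, (K + 1) / 2 ≤ m → m ≤ K - 2 →
      D m = ((m : ℝ) + 1) / m * (min (K - m) m : ℕ) /
        (1 + ((min (K - m) m : ℕ) - 1) / D (m + 1)))
    (γ : ℕ → ℝ)
    (hγ : ∀ m, γ m = ((K : ℝ) - m) / ((m : ℝ) * D m)) :
    (∀ m, (K + 1) / 2 ≤ m → m ≤ K - 2 → γ m = γ (m + 1) + 1 / ((m : ℝ) + 1)) ∧
    (∀ m, (K + 1) / 2 ≤ m → m ≤ K - 1 →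
      γ m = ∑ ℓ ∈ Icc (m + 1) K, (1 : ℝ) / ℓ) := by
  have hstep : ∀ m, (K + 1) / 2 ≤ m → m ≤ K - 2 → γ m = γ (m + 1) + 1 / ((m : ℝ) + 1) := by
    intro m hm hmK
    have hmin : min (K - m) m = K - m := min_eq_left (by omega)
    have hQ : ((K - m : ℕ) : ℝ) = K - m := Nat.cast_sub (by omega)
    have hm0 : (m : ℝ) ≠ 0 := by norm_cast; omega
    have hQ0 : (K : ℝ) - m ≠ 0 := by rw [← hQ]; norm_cast; omega
    rw [hγ, hγ, hrec m hm hmK, hmin, hQ, div_mul_recursion_eq _ hm0 (by positivity) hQ0]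
    push_cast
    ring
  have hlast : γ (K - 1) = ∑ ℓ ∈ Ioc (K - 1) K, (1 : ℝ) / ℓ := by
    have hK1 : ((K - 1 : ℕ) : ℝ) = K - 1 := Nat.cast_pred (by omega)
    have hK1ne : (K : ℝ) - 1 ≠ 0 := by rw [← hK1]; norm_cast; omega
    rw [show Ioc (K - 1) K = {K} by ext; simp; omega, sum_singleton, hγ, hinit, hK1]
    field_simp
    ring
  refine ⟨hstep, fun m hm hmK => ?_⟩
  rw [Icc_add_one_left_eq_Ioc]
  exact eq_sum_Ioc_of_eq_add_succ (g := fun ℓ : ℕ => (1 : ℝ) / ℓ) (Nat.sub_le K 1)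
    (fun k hk hkK => by exact_mod_cast hstep k hk (by omega)) hlast hm hmK

theorem stmt_2 (K : ℕ) (hK : 3 ≤ K) (D : ℕ → ℝ)
    (hpos : ∀ m, (K + 1) / 2 ≤ m → m ≤ K - 1 → 0 < D m)
    (hinit : D (K - 1) = (K : ℝ) / ((K : ℝ) - 1))
    (hrec : ∀ m, (K + 1) / 2 ≤ m → m ≤ K - 2 →
      D m = ((m : ℝ) + 1) / m * (min (K - m) m : ℕ) /
        (1 + ((min (K - m) m : ℕ) - 1) / D (m + 1)))
    (γ : ℕ → ℝ)
    (hγ : ∀ m, γ m = ((K : ℝ) - m) / ((m : ℝ) * D m)) :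
    (∀ m, (K + 1) / 2 ≤ m → m ≤ K - 2 → γ m = γ (m + 1) + 1 / ((m : ℝ) + 1)) ∧
    (∀ m, (K + 1) / 2 ≤ m → m ≤ K - 1 →
      γ m = ∑ ℓ ∈ Icc (m + 1) K, (1 : ℝ) / ℓ) :=
  stmt_2_general K hK D hinit hrec γ hγ
end

section
/- Let K ≥ 2 and consider the recursion D_m = (m+1)(Q_m(K)+1)/(m+1 + m·Q_m(K)/D_{m+1}) for 1 ≤ m ≤ K−1, with D_K = 1, where Q_m(K) = min(K−m, m). Then for ⌈K/2⌉ ≤ m ≤ K, D_m = ( (m/(K−m+1)) · Σ_{ℓ=m}^{K} 1/ℓ )^{-1}. -/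
/-!
Write `S m = ∑ ℓ ∈ Icc m K, 1 / ℓ`. For `m ≥ K / 2` we have `Q_m(K) = K - m`, and substituting
`D (m + 1) = (K - m) / ((m + 1) * S (m + 1))` into the recursion turns its denominator into
`(m + 1) * (1 + m * S (m + 1)) = (m + 1) * m * S m`, which gives `D m = (K - m + 1) / (m * S m)`
by downward induction from `D K = 1`.
-/

open Finset

lemma recursion_step_closed_form {a c S : ℝ} (ha : 0 < a) (hac : a < c) (hS : 0 ≤ S) :
    (a + 1) * (c - a + 1) / (a + 1 + a * (c - a) / ((a + 1) / (c - (a + 1) + 1) * S)⁻¹) =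
      (a / (c - a + 1) * (1 / a + S))⁻¹ := by
  have hca : c - (a + 1) + 1 = c - a := by ring
  have : 0 < c - a := sub_pos.mpr hac
  have : 0 < 1 + a * S := by positivity
  rw [hca]
  field_simp

theorem stmt_3_general (K : ℕ) (hK : 2 ≤ K) (D : ℕ → ℝ)
    (hinit : D K = 1)
    (hrec : ∀ m, 1 ≤ m → m ≤ K - 1 →
      D m = ((m : ℝ) + 1) * ((min (K - m) m : ℕ) + 1) /
        ((m : ℝ) + 1 + (m : ℝ) * (min (K - m) m : ℕ) / D (m + 1))) :
    ∀ m, (K + 1) / 2 ≤ m → m ≤ K →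
      D m = ((m : ℝ) / ((K : ℝ) - m + 1) * ∑ ℓ ∈ Icc m K, (1 : ℝ) / ℓ)⁻¹ := by
  intro m hm hmK
  induction hmK using Nat.decreasingInduction with
  | self =>
    have hK0 : (K : ℝ) ≠ 0 := by positivity
    simp [hinit, hK0]
  | of_succ m hmK ih =>
    have hQ : min (K - m) m = K - m := by omega
    rw [hrec m (by omega) (by omega), hQ, ih (by omega), Nat.cast_sub hmK.le,
      ← add_sum_Ioc_eq_sum_Icc hmK.le, ← Icc_add_one_left_eq_Ioc]
    push_cast
    have hm0 : (0 : ℝ) < m := by exact_mod_cast (by omega : 0 < m)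
    exact recursion_step_closed_form hm0 (by exact_mod_cast hmK)
      (sum_nonneg fun ℓ _ ↦ by positivity)

theorem stmt_3 (K : ℕ) (hK : 2 ≤ K) (D : ℕ → ℝ)
    (hpos : ∀ m, 1 ≤ m → m ≤ K → 0 < D m)
    (hinit : D K = 1)
    (hrec : ∀ m, 1 ≤ m → m ≤ K - 1 →
      D m = ((m : ℝ) + 1) * ((min (K - m) m : ℕ) + 1) /
        ((m : ℝ) + 1 + (m : ℝ) * (min (K - m) m : ℕ) / D (m + 1))) :
    ∀ m, (K + 1) / 2 ≤ m → m ≤ K →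
      D m = ((m : ℝ) / ((K : ℝ) - m + 1) * ∑ ℓ ∈ Icc m K, (1 : ℝ) / ℓ)⁻¹ :=
  stmt_3_general K hK D hinit hrec
end

section
/- Let K ≥ 2 and let D_m for ⌈K/2⌉ ≤ m ≤ K satisfy D_m = ( (m/(K−m+1)) Σ_{ℓ=m}^{K} 1/ℓ )^{-1}, and for 1 ≤ m < ⌈K/2⌉ let D_m satisfy the recursion 1/(m² D_m) = 1/(m²(m+1)) + 1/((m+1)² D_{m+1}). Then for 1 ≤ m < ⌈K/2⌉, 1/(m² D_m) = 1/⌈K/2⌉ − 1/m + Σ_{ℓ=m}^{⌈K/2⌉−1} 1/ℓ² + (1/(⌈K/2⌉(⌊K/2⌋+1))) Σ_{ℓ=⌈K/2⌉}^{K} 1/ℓ. -/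
open Finset

theorem stmt_4 (K : ℕ) (hK : 2 ≤ K) (D : ℕ → ℝ)
    (hpos : ∀ m, 1 ≤ m → m ≤ K → 0 < D m)
    (hclosed : ∀ m, (K + 1) / 2 ≤ m → m ≤ K →
      D m = ((m : ℝ) / ((K : ℝ) - m + 1) * ∑ ℓ ∈ Icc m K, (1 : ℝ) / ℓ)⁻¹)
    (hrec : ∀ m, 1 ≤ m → m < (K + 1) / 2 →
      1 / ((m : ℝ) ^ 2 * D m) =
        1 / ((m : ℝ) ^ 2 * ((m : ℝ) + 1)) + 1 / (((m : ℝ) + 1) ^ 2 * D (m + 1))) :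
    ∀ m, 1 ≤ m → m < (K + 1) / 2 →
      1 / ((m : ℝ) ^ 2 * D m) =
        1 / (((K + 1) / 2 : ℕ) : ℝ) - 1 / (m : ℝ)
        + ∑ ℓ ∈ Icc m ((K + 1) / 2 - 1), (1 : ℝ) / (ℓ : ℝ) ^ 2
        + 1 / ((((K + 1) / 2 : ℕ) : ℝ) * (((K / 2 : ℕ) : ℝ) + 1)) *
            ∑ ℓ ∈ Icc ((K + 1) / 2) K, (1 : ℝ) / ℓ := by
  set M := (K + 1) / 2 with hMdef
  have hM1 : 1 ≤ M := by omega
  have hMK : M ≤ K := by omega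
  have hMhalf : M + K / 2 = K := by omega
  -- key value at M
  have hMpos : (0 : ℝ) < (M : ℝ) := by exact_mod_cast hM1
  have hhalfpos : (0 : ℝ) < ((K / 2 : ℕ) : ℝ) + 1 := by positivity
  have hKM : (K : ℝ) - (M : ℝ) + 1 = ((K / 2 : ℕ) : ℝ) + 1 := by
    have : (K : ℝ) = (M : ℝ) + ((K / 2 : ℕ) : ℝ) := by exact_mod_cast (hMhalf.symm)
    rw [this]; ring
  have hbaseM : 1 / ((M : ℝ) ^ 2 * D M) =
      1 / ((M : ℝ) * (((K / 2 : ℕ) : ℝ) + 1)) * ∑ ℓ ∈ Icc M K, (1 : ℝ) / ℓ := by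
    rw [hclosed M le_rfl hMK, hKM]
    have hS : (0 : ℝ) < ∑ ℓ ∈ Icc M K, (1 : ℝ) / ℓ := by
      apply Finset.sum_pos
      · intro i hi
        simp only [mem_Icc] at hi
        have : 0 < (i : ℝ) := by exact_mod_cast (lt_of_lt_of_le hM1 hi.1)
        positivity
      · exact ⟨M, by simp [mem_Icc, hMK]⟩
    have h1 := hMpos.ne'
    have h2 := hhalfpos.ne'
    have h3 := hS.ne'
    field_simp
  -- main induction
  suffices H : ∀ n m, 1 ≤ m → m < M → M - m ≤ n →
      1 / ((m : ℝ) ^ 2 * D m) =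
        1 / (M : ℝ) - 1 / (m : ℝ)
        + ∑ ℓ ∈ Icc m (M - 1), (1 : ℝ) / (ℓ : ℝ) ^ 2
        + 1 / ((M : ℝ) * (((K / 2 : ℕ) : ℝ) + 1)) * ∑ ℓ ∈ Icc M K, (1 : ℝ) / ℓ by
    intro m hm hmM
    exact H (M - m) m hm hmM le_rfl
  intro n
  induction n with
  | zero => intro m hm hmM hn; omega
  | succ n ih =>
    intro m hm hmM hn
    have hmpos : (0 : ℝ) < (m : ℝ) := by exact_mod_cast hm
    have htel : 1 / ((m : ℝ) ^ 2 * ((m : ℝ) + 1)) =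
        1 / ((m : ℝ) + 1) - 1 / (m : ℝ) + 1 / (m : ℝ) ^ 2 := by
      have h1 : (0 : ℝ) < (m : ℝ) + 1 := by linarith
      field_simp
      ring
    rcases eq_or_lt_of_le (Nat.succ_le_of_lt hmM) with heq | hlt
    · -- m + 1 = M
      have hsum : ∑ ℓ ∈ Icc m (M - 1), (1 : ℝ) / (ℓ : ℝ) ^ 2 = 1 / (m : ℝ) ^ 2 := by
        have : M - 1 = m := by omega
        rw [this, Icc_self, sum_singleton]
      have heqM : m + 1 = M := by omega
      have hcast : ((m : ℝ) + 1) = (M : ℝ) := by exact_mod_cast heqM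
      rw [hrec m hm hmM, htel, heqM, hcast, hbaseM, hsum]
    · -- m + 1 < M
      have ih' := ih (m + 1) (by omega) hlt (by omega)
      rw [hrec m hm hmM]
      push_cast at ih' ⊢
      rw [ih', htel]
      have hsum : ∑ ℓ ∈ Icc m (M - 1), (1 : ℝ) / (ℓ : ℝ) ^ 2 =
          1 / (m : ℝ) ^ 2 + ∑ ℓ ∈ Icc (m + 1) (M - 1), (1 : ℝ) / (ℓ : ℝ) ^ 2 := by
        rw [Finset.Icc_eq_cons_Ioc (by omega : m ≤ M - 1), Finset.sum_cons,
          ← Finset.Icc_add_one_left_eq_Ioc]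
      rw [hsum]
      ring
end

section
/- For every integer K ≥ 3, the achievable DoF of the K-user interference channel with full-duplex delayed CSIT, given by D(K) = 4 / ( 3 − 2/(⌈K/2⌉(⌈K/2⌉−1)) + (4/(⌊K/2⌋(⌈K/2⌉−1))) Σ_{ℓ=⌈K/2⌉+1}^{K} 1/ℓ ), satisfies 1 < D(K) < 4/3. -/
/-!
Write `m = ⌈K/2⌉`, `f = ⌊K/2⌋` and `S = ∑_{ℓ=m+1}^K 1/ℓ`, a sum of `f` terms. Since
`m + 1 ≤ ℓ ≤ K ≤ 2m`, we have `f/(2m) < S ≤ f/(m+1)`. The lower bound makes the harmonic term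
outweigh `2/(m(m-1))`, so the denominator exceeds 3; the upper bound caps the harmonic term at
`4/((m-1)(m+1))`, which is below `1 + 2/(m(m-1))` because the difference is
`(m-1)²(m+2)/(m(m-1)(m+1)) > 0`, so the denominator is below 4.
-/

open Finset

theorem sum_Icc_one_div_le (a b : ℕ) :
    ∑ ℓ ∈ Icc (a + 1) b, (1 : ℝ) / ℓ ≤ ((b - a : ℕ) : ℝ) / (a + 1) := by
  have hcard : #(Icc (a + 1) b) = b - a := by rw [Nat.card_Icc]; omega
  calc ∑ ℓ ∈ Icc (a + 1) b, (1 : ℝ) / ℓ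
      ≤ #(Icc (a + 1) b) • ((1 : ℝ) / (a + 1)) := by
        refine sum_le_card_nsmul _ _ _ fun ℓ hℓ ↦ ?_
        gcongr
        exact_mod_cast (mem_Icc.1 hℓ).1
    _ = ((b - a : ℕ) : ℝ) / (a + 1) := by rw [hcard, nsmul_eq_mul, mul_one_div]

theorem div_two_mul_lt_sum_Icc_one_div {m K : ℕ} (hm : 2 ≤ m) (hmK : m < K) (hK : K ≤ 2 * m) :
    ((K - m : ℕ) : ℝ) / (2 * m) < ∑ ℓ ∈ Icc (m + 1) K, (1 : ℝ) / ℓ := by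
  have hcard : #(Icc (m + 1) K) = K - m := by rw [Nat.card_Icc]; omega
  have hle : ∀ ℓ ∈ Icc (m + 1) K, (1 : ℝ) / (2 * m) ≤ 1 / ℓ := fun ℓ hℓ ↦ by
    have := mem_Icc.1 hℓ
    gcongr
    · exact_mod_cast (by omega : 0 < ℓ)
    · exact_mod_cast (by omega : ℓ ≤ 2 * m)
  have hlt : (1 : ℝ) / (2 * m) < 1 / ((m + 1 : ℕ) : ℝ) := by
    gcongr
    exact_mod_cast (by omega : m + 1 < 2 * m)
  calc ((K - m : ℕ) : ℝ) / (2 * m) = ∑ _ℓ ∈ Icc (m + 1) K, (1 : ℝ) / (2 * m) := by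
        rw [sum_const, hcard, nsmul_eq_mul, mul_one_div]
    _ < ∑ ℓ ∈ Icc (m + 1) K, (1 : ℝ) / ℓ :=
        sum_lt_sum hle ⟨m + 1, mem_Icc.2 ⟨le_rfl, hmK⟩, hlt⟩

noncomputable def dofDenominator (m f S : ℝ) : ℝ :=
  3 - 2 / (m * (m - 1)) + 4 / (f * (m - 1)) * S

theorem three_lt_dofDenominator {m f S : ℝ} (hm : 2 ≤ m) (hf : 0 < f) (hS : f / (2 * m) < S) :
    3 < dofDenominator m f S := by
  have hm1 : 0 < m - 1 := by linarith
  have key : 4 / (f * (m - 1)) * (f / (2 * m)) = 2 / (m * (m - 1)) := by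
    field_simp; ring
  have := mul_lt_mul_of_pos_left hS (by positivity : 0 < 4 / (f * (m - 1)))
  rw [dofDenominator]
  linarith

theorem dofDenominator_lt_four {m f S : ℝ} (hm : 2 ≤ m) (hf : 0 < f) (hS : S ≤ f / (m + 1)) :
    dofDenominator m f S < 4 := by
  have hm1 : 0 < m - 1 := by linarith
  have hS' := mul_le_mul_of_nonneg_left hS (by positivity : 0 ≤ 4 / (f * (m - 1)))
  have key : 4 / (f * (m - 1)) * (f / (m + 1)) = 4 / ((m - 1) * (m + 1)) := by
    field_simp
  have gap : 4 / ((m - 1) * (m + 1)) < 1 + 2 / (m * (m - 1)) := by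
    have hdiff : 1 + 2 / (m * (m - 1)) - 4 / ((m - 1) * (m + 1))
        = (m - 1) ^ 2 * (m + 2) / (m * (m - 1) * (m + 1)) := by
      field_simp; ring
    have : 0 < (m - 1) ^ 2 * (m + 2) / (m * (m - 1) * (m + 1)) := by
      have : 0 < m + 2 := by linarith
      positivity
    linarith
  rw [dofDenominator]
  linarith

theorem stmt_7 (K : ℕ) (hK : 3 ≤ K) :
    1 < 4 / (3 - 2 / ((((K + 1) / 2 : ℕ) : ℝ) * ((((K + 1) / 2 : ℕ) : ℝ) - 1))
        + 4 / (((K / 2 : ℕ) : ℝ) * ((((K + 1) / 2 : ℕ) : ℝ) - 1)) *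
            ∑ ℓ ∈ Icc ((K + 1) / 2 + 1) K, (1 : ℝ) / ℓ) ∧
    4 / (3 - 2 / ((((K + 1) / 2 : ℕ) : ℝ) * ((((K + 1) / 2 : ℕ) : ℝ) - 1))
        + 4 / (((K / 2 : ℕ) : ℝ) * ((((K + 1) / 2 : ℕ) : ℝ) - 1)) *
            ∑ ℓ ∈ Icc ((K + 1) / 2 + 1) K, (1 : ℝ) / ℓ) < 4 / 3 := by
  set m := (K + 1) / 2 with hm_def
  have hm2 : 2 ≤ m := by omega
  have hm : (2 : ℝ) ≤ m := by exact_mod_cast hm2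
  have hf : (0 : ℝ) < (K / 2 : ℕ) := by exact_mod_cast (by omega : 0 < K / 2)
  have hcard : K - m = K / 2 := by omega
  have hlower := div_two_mul_lt_sum_Icc_one_div (K := K) hm2 (by omega) (by omega)
  have hupper := sum_Icc_one_div_le m K
  rw [hcard] at hlower hupper
  have h3 := three_lt_dofDenominator hm hf hlower
  have h4 := dofDenominator_lt_four hm hf hupper
  rw [dofDenominator] at h3 h4
  constructor
  · rw [lt_div_iff₀ (by linarith)]; linarith
  · rw [div_lt_div_iff₀ (by linarith) (by norm_num)]; linarith
end

section
/- Let K ≥ 2 and consider the recursion D_m = (m+1)·Q_m(K+1) / (m+1 + m(Q_m(K+1)−1)/D_{m+1}) for 2 ≤ m ≤ K−1, with D_K = 1, where Q_m(n) = min(n−m, m). Then for ⌊K/2⌋ < m ≤ K, D_m = ( (m/(K−m+1)) Σ_{ℓ=m}^{K} 1/ℓ )^{-1}. -/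
/-!
Put `x_m := Q_m(K+1) / D_m`. For `m > ⌊K/2⌋` we have `Q_m(K+1) = K + 1 - m`, so `Q_{m+1} = Q_m - 1`
and the recursion becomes the affine one `x_m = 1 + m/(m+1) · x_{m+1}` with `x_K = 1`. The tail
harmonic sums `m · ∑_{ℓ=m}^K 1/ℓ` satisfy the same recursion with the same terminal value, so
`x_m = m · ∑_{ℓ=m}^K 1/ℓ` by downward induction, which is the claim.
-/

open Finset

theorem mul_sum_Icc_one_div_eq_one_add {m K : ℕ} (hm : 0 < m) (hmK : m ≤ K) :
    (m : ℝ) * ∑ ℓ ∈ Icc m K, (1 : ℝ) / ℓ =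
      1 + m / (m + 1) * (((m + 1 : ℕ) : ℝ) * ∑ ℓ ∈ Icc (m + 1) K, (1 : ℝ) / ℓ) := by
  rw [← insert_Icc_add_one_left_eq_Icc hmK, sum_insert (by simp)]
  have : (m : ℝ) ≠ 0 := by positivity
  push_cast
  field_simp

theorem div_eq_one_add_of_eq_div {D D' a Q : ℝ} (hQ : Q ≠ 0) (ha : a + 1 ≠ 0)
    (h : D = (a + 1) * Q / (a + 1 + a * (Q - 1) / D')) :
    Q / D = 1 + a / (a + 1) * ((Q - 1) / D') := by
  rw [h, div_div_eq_mul_div, mul_comm (a + 1) Q, mul_div_mul_left _ _ hQ]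
  field_simp

theorem cast_min_sub_eq_of_div_two_lt {K m : ℕ} (hm : K / 2 < m) (hmK : m ≤ K) :
    ((min (K + 1 - m) m : ℕ) : ℝ) = K - m + 1 := by
  rw [min_eq_left (by omega), Nat.cast_sub (by omega)]
  push_cast
  ring

theorem stmt_11_general (K : ℕ) (D : ℕ → ℝ)
    (hinit : D K = 1)
    (hrec : ∀ m, 2 ≤ m → m ≤ K - 1 →
      D m = ((m : ℝ) + 1) * (min (K + 1 - m) m : ℕ) /
        ((m : ℝ) + 1 + (m : ℝ) * ((min (K + 1 - m) m : ℕ) - 1) / D (m + 1))) :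
    ∀ m, K / 2 < m → m ≤ K →
      D m = ((m : ℝ) / ((K : ℝ) - m + 1) * ∑ ℓ ∈ Icc m K, (1 : ℝ) / ℓ)⁻¹ := by
  have hQ_pos : ∀ m ≤ K, (0 : ℝ) < K - m + 1 := fun m hmK => by
    have : (m : ℝ) ≤ K := by exact_mod_cast hmK
    linarith
  have harmonic : ∀ m, K / 2 < m → m ≤ K →
      ((K : ℝ) - m + 1) / D m = m * ∑ ℓ ∈ Icc m K, (1 : ℝ) / ℓ := by
    intro m hm hmK
    induction hmK using Nat.decreasingInduction with
    | self =>
      have : (K : ℝ) ≠ 0 := Nat.cast_ne_zero.mpr (by omega)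
      simp [hinit, this]
    | of_succ k hk ih =>
      have hQ := cast_min_sub_eq_of_div_two_lt hm hk.le
      have hstep := hrec k (by omega) (by omega)
      rw [hQ] at hstep
      rw [div_eq_one_add_of_eq_div (hQ_pos k hk.le).ne' (by positivity) hstep,
        mul_sum_Icc_one_div_eq_one_add (by omega) hk.le, ← ih (by omega)]
      push_cast
      ring
  intro m hm hmK
  rw [div_mul_eq_mul_div, ← harmonic m hm hmK, div_div_cancel_left' (hQ_pos m hmK).ne', inv_inv]

theorem stmt_11 (K : ℕ) (hK : 2 ≤ K) (D : ℕ → ℝ)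
    (hpos : ∀ m, 2 ≤ m → m ≤ K → 0 < D m)
    (hinit : D K = 1)
    (hrec : ∀ m, 2 ≤ m → m ≤ K - 1 →
      D m = ((m : ℝ) + 1) * (min (K + 1 - m) m : ℕ) /
        ((m : ℝ) + 1 + (m : ℝ) * ((min (K + 1 - m) m : ℕ) - 1) / D (m + 1))) :
    ∀ m, K / 2 < m → m ≤ K →
      D m = ((m : ℝ) / ((K : ℝ) - m + 1) * ∑ ℓ ∈ Icc m K, (1 : ℝ) / ℓ)⁻¹ :=
  stmt_11_general K D hinit hrec
end

section
/- Let K ≥ 4 and let D_m satisfy the recursion 1/D_m = 1/m + ((m−1)/(m+1))·(1/D_{m+1}) for 2 ≤ m ≤ ⌊K/2⌋, with boundary value 1/D_{⌊K/2⌋+1} = ((⌊K/2⌋+1)/⌈K/2⌉) Σ_{ℓ=⌊K/2⌋+1}^{K} 1/ℓ. Then for 2 ≤ m ≤ ⌊K/2⌋, 1/D_m = 1/m + m(m−1)·[ 1/m − 1/⌊K/2⌋ − Σ_{ℓ=m+1}^{⌊K/2⌋} 1/ℓ² + (1/(⌊K/2⌋⌈K/2⌉)) Σ_{ℓ=⌊K/2⌋+1}^{K}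 1/ℓ ]. -/
/-!
With `u m = x (m+1) / (m(m+1))` the recursion reads `x m = 1/m + m(m-1) u m` and
`u m = u (m+1) + 1/(m(m+1)²)`, and `1/(ℓ(ℓ+1)²) = 1/ℓ - 1/(ℓ+1) - 1/(ℓ+1)²` makes it telescope.
-/

open Finset

lemma one_div_mul_add_one_sq {x : ℝ} (hx : x ≠ 0) (hx' : x + 1 ≠ 0) :
    1 / (x * (x + 1) ^ 2) = 1 / x - 1 / (x + 1) - 1 / (x + 1) ^ 2 := by
  field_simp
  ring

lemma eq_sub_sum_one_div_sq_of_step (u : ℕ → ℝ) (n : ℕ)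
    (hu : ∀ m, 1 ≤ m → m < n → u m = 1 / ((m : ℝ) * ((m : ℝ) + 1) ^ 2) + u (m + 1)) :
    ∀ m, 1 ≤ m → m ≤ n →
      u m = 1 / (m : ℝ) - 1 / (n : ℝ) - ∑ ℓ ∈ Icc (m + 1) n, 1 / (ℓ : ℝ) ^ 2 + u n := by
  intro m hm hmn
  induction hmn using Nat.decreasingInduction with
  | self => simp
  | of_succ k hkn ih =>
    have hk : (k : ℝ) ≠ 0 := by positivity
    have hsplit : ∑ ℓ ∈ Icc (k + 1) n, 1 / (ℓ : ℝ) ^ 2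
        = 1 / ((k : ℝ) + 1) ^ 2 + ∑ ℓ ∈ Icc (k + 1 + 1) n, 1 / (ℓ : ℝ) ^ 2 := by
      rw [← insert_Icc_add_one_left_eq_Icc (by omega : k + 1 ≤ n), sum_insert (by simp)]
      push_cast
      rfl
    rw [hu k hm hkn, ih (by omega), one_div_mul_add_one_sq hk (by positivity), hsplit]
    push_cast
    ring

lemma eq_closed_form_of_recursion (x : ℕ → ℝ) (n : ℕ)
    (hx : ∀ m, 2 ≤ m → m ≤ n → x m = 1 / (m : ℝ) + ((m : ℝ) - 1) / ((m : ℝ) + 1) * x (m + 1)) :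
    ∀ m, 2 ≤ m → m ≤ n →
      x m = 1 / (m : ℝ) + (m : ℝ) * ((m : ℝ) - 1) *
        (1 / (m : ℝ) - 1 / (n : ℝ) - ∑ ℓ ∈ Icc (m + 1) n, 1 / (ℓ : ℝ) ^ 2
          + x (n + 1) / ((n : ℝ) * ((n : ℝ) + 1))) := by
  set u : ℕ → ℝ := fun m => x (m + 1) / ((m : ℝ) * ((m : ℝ) + 1))
  have hstep : ∀ m, 1 ≤ m → m < n →
      u m = 1 / ((m : ℝ) * ((m : ℝ) + 1) ^ 2) + u (m + 1) := by
    intro m hm hmn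
    have hm0 : (m : ℝ) ≠ 0 := by positivity
    simp only [u, hx (m + 1) (by omega) hmn]
    push_cast
    field_simp
    ring
  intro m hm hmn
  have hu := eq_sub_sum_one_div_sq_of_step u n hstep m (by omega) hmn
  have hm0 : (m : ℝ) ≠ 0 := by positivity
  simp only [u] at hu
  rw [hx m hm hmn, ← hu]
  field_simp

theorem stmt_12_general (K : ℕ) (D : ℕ → ℝ)
    (hrec : ∀ m, 2 ≤ m → m ≤ K / 2 →
      1 / D m = 1 / (m : ℝ) + ((m : ℝ) - 1) / ((m : ℝ) + 1) * (1 / D (m + 1)))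
    (hbd : 1 / D (K / 2 + 1) =
      (((K / 2 : ℕ) : ℝ) + 1) / (((K + 1) / 2 : ℕ) : ℝ) *
        ∑ ℓ ∈ Icc (K / 2 + 1) K, (1 : ℝ) / ℓ) :
    ∀ m, 2 ≤ m → m ≤ K / 2 →
      1 / D m = 1 / (m : ℝ) + (m : ℝ) * ((m : ℝ) - 1) *
        (1 / (m : ℝ) - 1 / ((K / 2 : ℕ) : ℝ)
          - (∑ ℓ ∈ Icc (m + 1) (K / 2), (1 : ℝ) / (ℓ : ℝ) ^ 2)
          + 1 / (((K / 2 : ℕ) : ℝ) * (((K + 1) / 2 : ℕ) : ℝ)) *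
              ∑ ℓ ∈ Icc (K / 2 + 1) K, (1 : ℝ) / ℓ) := by
  intro m hm hmK
  rw [eq_closed_form_of_recursion (fun m => 1 / D m) (K / 2) hrec m hm hmK, hbd]
  have hH : ((K / 2 : ℕ) : ℝ) + 1 ≠ 0 := by positivity
  field_simp

theorem stmt_12 (K : ℕ) (hK : 4 ≤ K) (D : ℕ → ℝ)
    (hpos : ∀ m, 2 ≤ m → m ≤ K / 2 + 1 → 0 < D m)
    (hrec : ∀ m, 2 ≤ m → m ≤ K / 2 →
      1 / D m = 1 / (m : ℝ) + ((m : ℝ) - 1) / ((m : ℝ) + 1) * (1 / D (m + 1)))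
    (hbd : 1 / D (K / 2 + 1) =
      (((K / 2 : ℕ) : ℝ) + 1) / (((K + 1) / 2 : ℕ) : ℝ) *
        ∑ ℓ ∈ Icc (K / 2 + 1) K, (1 : ℝ) / ℓ) :
    ∀ m, 2 ≤ m → m ≤ K / 2 →
      1 / D m = 1 / (m : ℝ) + (m : ℝ) * ((m : ℝ) - 1) *
        (1 / (m : ℝ) - 1 / ((K / 2 : ℕ) : ℝ)
          - (∑ ℓ ∈ Icc (m + 1) (K / 2), (1 : ℝ) / (ℓ : ℝ) ^ 2)
          + 1 / (((K / 2 : ℕ) : ℝ) * (((K + 1) / 2 : ℕ) : ℝ)) *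
              ∑ ℓ ∈ Icc (K / 2 + 1) K, (1 : ℝ) / ℓ) :=
  stmt_12_general K D hrec hbd
end

section
/- For fixed M = 2, the limit as K → ∞ of the achievable DoF D(2,K) = ( 1/(M−1) − 1 + Σ_{ℓ₁=1}^{M−2} 1/ℓ₁² + (1/M²) Σ_{ℓ₂=M−1}^{K} (1/ℓ₂)((M−1)/M)^{min(ℓ₂,K−M+1)−M} )^{-1} evaluated at M = 2, i.e., D(2,K) = ( (1/4) Σ_{ℓ=1}^{K} (1/ℓ)(1/2)^{min(ℓ,K−1)−2} )^{-1}, equals 1/ln 2. -/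
open Finset Filter Topology

/-! For `ℓ < K` the `ℓ`-th summand is `x ^ (ℓ - 2) / ℓ`, a term of the series
`x⁻² ∑ x ^ ℓ / ℓ = -x⁻² log (1 - x)`; only the last summand, with exponent `K - 3`, deviates, and
it tends to `0`. At `x = 1/2` this gives `(1/4) · 4 log 2 = log 2`. -/

lemma Finset.sum_Icc_one_eq_sum_range {M : Type*} [AddCommMonoid M] (f : ℕ → M) (n : ℕ) :
    ∑ k ∈ Icc 1 n, f k = ∑ k ∈ range n, f (k + 1) := by
  rw [← Ico_add_one_right_eq_Icc, sum_Ico_eq_sum_range, Nat.add_sub_cancel]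
  simp only [add_comm]

lemma Real.tendsto_sum_pow_div_log {x : ℝ} (hx : |x| < 1) :
    Tendsto (fun n : ℕ => ∑ k ∈ Icc 1 n, x ^ k / k) atTop (𝓝 (-Real.log (1 - x))) := by
  simpa [Finset.sum_Icc_one_eq_sum_range] using
    (Real.hasSum_pow_div_log_of_abs_lt_one hx).tendsto_sum_nat

lemma tendsto_pow_div_natCast_atTop {x : ℝ} (hx : |x| < 1) :
    Tendsto (fun n : ℕ => x ^ n / n) atTop (𝓝 0) :=
  (tendsto_pow_atTop_nhds_zero_of_abs_lt_one hx).div_atTop tendsto_natCast_atTop_atTop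

lemma sum_inv_mul_zpow_min_eq {x : ℝ} (hx : x ≠ 0) (K : ℕ) :
    ∑ ℓ ∈ Icc 1 K, 1 / (ℓ : ℝ) * x ^ ((min ℓ (K - 1) : ℤ) - 2)
      = x ^ (-2 : ℤ) * (∑ ℓ ∈ Icc 1 K, x ^ ℓ / ℓ + (x⁻¹ - 1) * (x ^ K / K)) := by
  rcases K with _ | n
  · simp
  have hlow : ∀ ℓ ∈ Icc 1 n, 1 / (ℓ : ℝ) * x ^ ((min ℓ ((n + 1 : ℕ) - 1) : ℤ) - 2)
      = x ^ (-2 : ℤ) * (x ^ ℓ / ℓ) := by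
    intro ℓ hℓ
    rw [mem_Icc] at hℓ
    rw [min_eq_left (by push_cast; lia), sub_eq_add_neg, zpow_add₀ hx, zpow_natCast]
    ring
  rw [sum_Icc_succ_top (by lia), sum_Icc_succ_top (by lia), sum_congr rfl hlow, ← mul_sum,
    min_eq_right (by lia)]
  push_cast
  rw [show (n : ℤ) + 1 - 1 - 2 = -2 + n by ring, zpow_add₀ hx, zpow_natCast]
  field_simp
  ring

lemma tendsto_sum_inv_mul_zpow_min {x : ℝ} (hx0 : x ≠ 0) (hx : |x| < 1) :
    Tendsto (fun K : ℕ => ∑ ℓ ∈ Icc 1 K, 1 / (ℓ : ℝ) * x ^ ((min ℓ (K - 1) : ℤ) - 2)) atTop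
      (𝓝 (x ^ (-2 : ℤ) * -Real.log (1 - x))) := by
  simp_rw [sum_inv_mul_zpow_min_eq hx0]
  simpa using ((Real.tendsto_sum_pow_div_log hx).add
    ((tendsto_pow_div_natCast_atTop hx).const_mul (x⁻¹ - 1))).const_mul (x ^ (-2 : ℤ))

theorem stmt_15 :
    Tendsto (fun K : ℕ =>
      ((1 : ℝ) / 4 *
        ∑ ℓ ∈ Icc 1 K, (1 : ℝ) / ℓ * ((1 : ℝ) / 2) ^ ((min ℓ (K - 1) : ℤ) - 2))⁻¹)
      atTop (nhds (1 / Real.log 2)) := by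
  have hsum := tendsto_sum_inv_mul_zpow_min (x := 1 / 2) (by norm_num) (by norm_num [abs_of_pos])
  have hlimit : (1 : ℝ) / 4 * ((1 / 2) ^ (-2 : ℤ) * -Real.log (1 - 1 / 2)) = Real.log 2 := by
    rw [show (1 : ℝ) - 1 / 2 = 2⁻¹ by norm_num, Real.log_inv]
    ring
  rw [one_div (Real.log 2)]
  exact (hlimit ▸ hsum.const_mul (1 / 4)).inv₀ (by positivity)
end
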